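/- arXiv:2411.16953 — 2 statements merged into one kernel-verified Lean document; each statement's English description precedes it below -/
import Mathlib

section
/- Let M = GL2 act on quadruples a = (a1,a2,a3,a4) via the identification with binary cubic forms f_a(u,v) = a1u³+3a2u²v+3a3uv²+a4v³, where m = (a b; c d) acts by (ρ3(m)f_a)(u,v) = f_a(du+bv, cu+av). Then for all m ∈ GL2(R) and all quadruples a, the Freudenthal quartic satisfies q(ρ3(m)a) = det(m)⁶ · q(a). -/
/-- The Freudenthal quartic form on coefficients of a binary cubic. -/
def qFreu {R : Type*} [CommRing R] (x : R × R × R × R) : R :=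
  match x with
  | (a1, a2, a3, a4) =>
    -3*a2^2*a3^2 + 4*a1*a3^3 + 4*a2^3*a4 - 6*a1*a2*a3*a4 + a1^2*a4^2

/-- The symmetric-cube action of the matrix (a b; c d) on quadruples identified with
binary cubics f_x(u,v) = a1u³+3a2u²v+3a3uv²+a4v³, via (ρ3(m)f)(u,v) = f(du+bv, cu+av):
the result is the coefficient quadruple of the transformed cubic. -/
def rho3 {R : Type*} [CommRing R] (a b c d : R) (x : R × R × R × R) : R × R × R × R :=
  match x with
  | (a1, a2, a3, a4) =>
    (a1*d^3 + 3*a2*d^2*c + 3*a3*d*c^2 + a4*c^3,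
     a1*d^2*b + a2*(2*d*b*c + d^2*a) + a3*(b*c^2 + 2*d*c*a) + a4*c^2*a,
     a1*d*b^2 + a2*(b^2*c + 2*d*b*a) + a3*(2*b*c*a + d*a^2) + a4*c*a^2,
     a1*b^3 + 3*a2*b^2*a + 3*a3*b*a^2 + a4*a^3)

/-- q(ρ3(m)a) = det(m)⁶ · q(a) for all m ∈ GL2(R) (indeed all 2×2 matrices). -/
theorem stmt1 {R : Type*} [CommRing R] (a b c d : R) (x : R × R × R × R) :
    qFreu (rho3 a b c d x) = (a*d - b*c)^6 * qFreu x := by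
  obtain ⟨a1, a2, a3, a4⟩ := x
  simp only [qFreu, rho3]
  ring
end

section
/- For every integer n ≥ 0, the dimension of Symⁿ(Sym³ ℂ²) as computed by the decomposition Symⁿ(Sym³ℂ²) ≅ ⊕_{i=0}^{n} (Sym^{3n-2i}ℂ²)^{⊕(⌊i/2⌋-⌊(i-1)/3⌋)} ⊕ ⊕_{i=n+1}^{⌊3n/2⌋} (Sym^{3n-2i}ℂ²)^{⊕(⌊i/2⌋-⌊(i-1)/3⌋-⌊(i-n-1)/2⌋-1)} is consistent: the total dimension ∑_{i=0}^{n}(⌊i/2⌋-⌊(i-1)/3⌋)(3n-2i+1) + ∑_{i=n+1}^{⌊3n/2⌋}(⌊i/2⌋-⌊(i-1)/3⌋-⌊(i-n-1)/2⌋-1)(3n-2i+1) equals dim Symⁿ(ℂ⁴) = (n+1)(n+2)(n+3)/6, where ⌊·⌋ is the floor function with ⌊-1/3⌋ = -1. -/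
open Finset

private def E0t : ℕ → ℤ
  | 0 => 0 | 1 => 7 | 2 => 0 | 3 => 3 | 4 => 4 | _ => 3
private def B1t : ℕ → ℤ
  | 0 => -30 | 1 => 12 | 2 => -30 | 3 => -12 | 4 => -6 | _ => -12
private def C1t : ℕ → ℤ
  | 0 => 0 | 1 => -25 | 2 => -8 | 3 => -9 | 4 => -16 | _ => -17
private def EU0t : ℕ → ℤ
  | 0 => 0 | _ => 1
private def B2t : ℕ → ℤ
  | 0 => -10 | _ => -4
private def C2t : ℕ → ℤ
  | 0 => 0 | _ => -3

private lemma LT0 (N : ℕ) : 12 * ∑ i ∈ Finset.range N, ((i:ℤ)/2 - ((i:ℤ)-1)/3)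
    = (N:ℤ)^2 + 4*(N:ℤ) + E0t (N % 6) := by
  induction N with
  | zero => rw [show E0t (0 % 6) = 0 from rfl]; simp
  | succ N ih =>
    obtain ⟨q, r, hr, rfl⟩ : ∃ q r, r < 6 ∧ N = 6*q + r := ⟨N/6, N%6, by omega, by omega⟩
    rw [Finset.sum_range_succ, mul_add, ih]
    interval_cases r

    · rw [show (6*q+0) % 6 = 0 from by omega, show (6*q+0+1) % 6 = 1 from by omega,
        show E0t 0 = 0 from rfl, show E0t 1 = 7 from rfl,
        show ((6*q+0:ℕ):ℤ)/2 - (((6*q+0:ℕ):ℤ)-1)/3 = (q:ℤ) + 1 from by omega]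
      push_cast; ring
    · rw [show (6*q+1) % 6 = 1 from by omega, show (6*q+1+1) % 6 = 2 from by omega,
        show E0t 1 = 7 from rfl, show E0t 2 = 0 from rfl,
        show ((6*q+1:ℕ):ℤ)/2 - (((6*q+1:ℕ):ℤ)-1)/3 = (q:ℤ) + 0 from by omega]
      push_cast; ring
    · rw [show (6*q+2) % 6 = 2 from by omega, show (6*q+2+1) % 6 = 3 from by omega,
        show E0t 2 = 0 from rfl, show E0t 3 = 3 from rfl,
        show ((6*q+2:ℕ):ℤ)/2 - (((6*q+2:ℕ):ℤ)-1)/3 = (q:ℤ) + 1 from by omega]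
      push_cast; ring
    · rw [show (6*q+3) % 6 = 3 from by omega, show (6*q+3+1) % 6 = 4 from by omega,
        show E0t 3 = 3 from rfl, show E0t 4 = 4 from rfl,
        show ((6*q+3:ℕ):ℤ)/2 - (((6*q+3:ℕ):ℤ)-1)/3 = (q:ℤ) + 1 from by omega]
      push_cast; ring
    · rw [show (6*q+4) % 6 = 4 from by omega, show (6*q+4+1) % 6 = 5 from by omega,
        show E0t 4 = 4 from rfl, show E0t 5 = 3 from rfl,
        show ((6*q+4:ℕ):ℤ)/2 - (((6*q+4:ℕ):ℤ)-1)/3 = (q:ℤ) + 1 from by omega]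
      push_cast; ring
    · rw [show (6*q+5) % 6 = 5 from by omega, show (6*q+5+1) % 6 = 0 from by omega,
        show E0t 5 = 3 from rfl, show E0t 0 = 0 from rfl,
        show ((6*q+5:ℕ):ℤ)/2 - (((6*q+5:ℕ):ℤ)-1)/3 = (q:ℤ) + 1 from by omega]
      push_cast; ring

private lemma LT1 (N : ℕ) : 72 * ∑ i ∈ Finset.range N, (i:ℤ) * ((i:ℤ)/2 - ((i:ℤ)-1)/3)
    = 4*(N:ℤ)^3 + 9*(N:ℤ)^2 + B1t (N % 6) * (N:ℤ) + C1t (N % 6) := by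
  induction N with
  | zero => rw [show B1t (0 % 6) = -30 from rfl, show C1t (0 % 6) = 0 from rfl]; simp
  | succ N ih =>
    obtain ⟨q, r, hr, rfl⟩ : ∃ q r, r < 6 ∧ N = 6*q + r := ⟨N/6, N%6, by omega, by omega⟩
    rw [Finset.sum_range_succ, mul_add, ih]
    interval_cases r
    · rw [show (6*q+0) % 6 = 0 from by omega, show (6*q+0+1) % 6 = 1 from by omega,
        show B1t 0 = -30 from rfl, show C1t 0 = 0 from rfl,
        show B1t 1 = 12 from rfl, show C1t 1 = -25 from rfl,
        show ((6*q+0:ℕ):ℤ)/2 - (((6*q+0:ℕ):ℤ)-1)/3 = (q:ℤ) + 1 from by omega]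
      push_cast; ring
    · rw [show (6*q+1) % 6 = 1 from by omega, show (6*q+1+1) % 6 = 2 from by omega,
        show B1t 1 = 12 from rfl, show C1t 1 = -25 from rfl,
        show B1t 2 = -30 from rfl, show C1t 2 = -8 from rfl,
        show ((6*q+1:ℕ):ℤ)/2 - (((6*q+1:ℕ):ℤ)-1)/3 = (q:ℤ) + 0 from by omega]
      push_cast; ring
    · rw [show (6*q+2) % 6 = 2 from by omega, show (6*q+2+1) % 6 = 3 from by omega,
        show B1t 2 = -30 from rfl, show C1t 2 = -8 from rfl,
        show B1t 3 = -12 from rfl, show C1t 3 = -9 from rfl,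
        show ((6*q+2:ℕ):ℤ)/2 - (((6*q+2:ℕ):ℤ)-1)/3 = (q:ℤ) + 1 from by omega]
      push_cast; ring
    · rw [show (6*q+3) % 6 = 3 from by omega, show (6*q+3+1) % 6 = 4 from by omega,
        show B1t 3 = -12 from rfl, show C1t 3 = -9 from rfl,
        show B1t 4 = -6 from rfl, show C1t 4 = -16 from rfl,
        show ((6*q+3:ℕ):ℤ)/2 - (((6*q+3:ℕ):ℤ)-1)/3 = (q:ℤ) + 1 from by omega]
      push_cast; ring
    · rw [show (6*q+4) % 6 = 4 from by omega, show (6*q+4+1) % 6 = 5 from by omega,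
        show B1t 4 = -6 from rfl, show C1t 4 = -16 from rfl,
        show B1t 5 = -12 from rfl, show C1t 5 = -17 from rfl,
        show ((6*q+4:ℕ):ℤ)/2 - (((6*q+4:ℕ):ℤ)-1)/3 = (q:ℤ) + 1 from by omega]
      push_cast; ring
    · rw [show (6*q+5) % 6 = 5 from by omega, show (6*q+5+1) % 6 = 0 from by omega,
        show B1t 5 = -12 from rfl, show C1t 5 = -17 from rfl,
        show B1t 0 = -30 from rfl, show C1t 0 = 0 from rfl,
        show ((6*q+5:ℕ):ℤ)/2 - (((6*q+5:ℕ):ℤ)-1)/3 = (q:ℤ) + 1 from by omega]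
      push_cast; ring

private lemma LU0 (K : ℕ) : 4 * ∑ j ∈ Finset.range K, ((j:ℤ)/2 + 1)
    = (K:ℤ)^2 + 2*(K:ℤ) + EU0t (K % 2) := by
  induction K with
  | zero => rw [show EU0t (0 % 2) = 0 from rfl]; simp
  | succ K ih =>
    obtain ⟨q, r, hr, rfl⟩ : ∃ q r, r < 2 ∧ K = 2*q + r := ⟨K/2, K%2, by omega, by omega⟩
    rw [Finset.sum_range_succ, mul_add, ih]
    interval_cases r
    · rw [show (2*q+0) % 2 = 0 from by omega, show (2*q+0+1) % 2 = 1 from by omega,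
        show EU0t 0 = 0 from rfl, show EU0t 1 = 1 from rfl,
        show ((2*q+0:ℕ):ℤ)/2 + 1 = (q:ℤ) + 1 from by omega]
      push_cast; ring
    · rw [show (2*q+1) % 2 = 1 from by omega, show (2*q+1+1) % 2 = 0 from by omega,
        show EU0t 1 = 1 from rfl, show EU0t 0 = 0 from rfl,
        show ((2*q+1:ℕ):ℤ)/2 + 1 = (q:ℤ) + 1 from by omega]
      push_cast; ring

private lemma LU1 (K : ℕ) : 24 * ∑ j ∈ Finset.range K, (j:ℤ) * ((j:ℤ)/2 + 1)
    = 4*(K:ℤ)^3 + 3*(K:ℤ)^2 + B2t (K % 2) * (K:ℤ) + C2t (K % 2) := by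
  induction K with
  | zero => rw [show B2t (0 % 2) = -10 from rfl, show C2t (0 % 2) = 0 from rfl]; simp
  | succ K ih =>
    obtain ⟨q, r, hr, rfl⟩ : ∃ q r, r < 2 ∧ K = 2*q + r := ⟨K/2, K%2, by omega, by omega⟩
    rw [Finset.sum_range_succ, mul_add, ih]
    interval_cases r
    · rw [show (2*q+0) % 2 = 0 from by omega, show (2*q+0+1) % 2 = 1 from by omega,
        show B2t 0 = -10 from rfl, show C2t 0 = 0 from rfl,
        show B2t 1 = -4 from rfl, show C2t 1 = -3 from rfl,
        show ((2*q+0:ℕ):ℤ)/2 + 1 = (q:ℤ) + 1 from by omega]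
      push_cast; ring
    · rw [show (2*q+1) % 2 = 1 from by omega, show (2*q+1+1) % 2 = 0 from by omega,
        show B2t 1 = -4 from rfl, show C2t 1 = -3 from rfl,
        show B2t 0 = -10 from rfl, show C2t 0 = 0 from rfl,
        show ((2*q+1:ℕ):ℤ)/2 + 1 = (q:ℤ) + 1 from by omega]
      push_cast; ring

private lemma hchoose (n : ℕ) : 6 * (n+3).choose 3 = (n+1)*(n+2)*(n+3) := by
  have h := Nat.choose_mul_factorial_mul_factorial (show 3 ≤ n+3 by omega)
  rw [show n+3-3 = n from by omega] at h
  apply Nat.eq_of_mul_eq_mul_right (Nat.factorial_pos n)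
  calc 6 * (n+3).choose 3 * n.factorial
      = (n+3).choose 3 * Nat.factorial 3 * n.factorial := by
        rw [show Nat.factorial 3 = 6 from rfl]; ring
    _ = (n+3).factorial := h
    _ = (n+1)*(n+2)*(n+3) * n.factorial := by
        rw [show n+3 = (n+2)+1 from rfl, Nat.factorial_succ,
          show n+2 = (n+1)+1 from rfl, Nat.factorial_succ, Nat.factorial_succ]
        ring

private lemma key (n : ℕ) :
    (∑ i ∈ Finset.range (3*n/2+1), ((i:ℤ)/2 - ((i:ℤ)-1)/3) * (3*(n:ℤ) - 2*(i:ℤ) + 1))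
      - (∑ j ∈ Finset.range (n/2), ((j:ℤ)/2 + 1) * ((n:ℤ) - 1 - 2*(j:ℤ)))
      = ((n+3).choose 3 : ℤ) := by
  have h1 : ∀ X : ℕ, ∑ i ∈ Finset.range X, ((i:ℤ)/2 - ((i:ℤ)-1)/3) * (3*(n:ℤ) - 2*(i:ℤ) + 1)
      = (3*(n:ℤ)+1) * (∑ i ∈ Finset.range X, ((i:ℤ)/2 - ((i:ℤ)-1)/3))
        - 2 * (∑ i ∈ Finset.range X, (i:ℤ) * ((i:ℤ)/2 - ((i:ℤ)-1)/3)) := by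
    intro X
    rw [Finset.mul_sum, Finset.mul_sum, ← Finset.sum_sub_distrib]
    exact Finset.sum_congr rfl fun i _ => by ring
  have h2 : ∑ j ∈ Finset.range (n/2), ((j:ℤ)/2 + 1) * ((n:ℤ) - 1 - 2*(j:ℤ))
      = ((n:ℤ)-1) * (∑ j ∈ Finset.range (n/2), ((j:ℤ)/2 + 1))
        - 2 * (∑ j ∈ Finset.range (n/2), (j:ℤ) * ((j:ℤ)/2 + 1)) := by
    rw [Finset.mul_sum, Finset.mul_sum, ← Finset.sum_sub_distrib]
    exact Finset.sum_congr rfl fun j _ => by ring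
  rw [h1, h2]
  obtain ⟨q, r, hr, rfl⟩ : ∃ q r, r < 12 ∧ n = 12*q + r := ⟨n/12, n%12, by omega, by omega⟩
  interval_cases r
  · rw [show 3*(12*q+0)/2+1 = 18*q+1 from by omega, show (12*q+0)/2 = 6*q+0 from by omega]
    have t0 := LT0 (18*q+1)
    have t1 := LT1 (18*q+1)
    have u0 := LU0 (6*q+0)
    have u1 := LU1 (6*q+0)
    have hc := hchoose (12*q+0)
    zify at hc
    rw [show (18*q+1) % 6 = 1 from by omega, show E0t 1 = 7 from rfl] at t0
    rw [show (18*q+1) % 6 = 1 from by omega, show B1t 1 = 12 from rfl,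
      show C1t 1 = -25 from rfl] at t1
    rw [show (6*q+0) % 2 = 0 from by omega, show EU0t 0 = 0 from rfl] at u0
    rw [show (6*q+0) % 2 = 0 from by omega, show B2t 0 = -10 from rfl,
      show C2t 0 = 0 from rfl] at u1
    apply mul_left_cancel₀ (show (36:ℤ) ≠ 0 by norm_num)
    push_cast at t0 t1 u0 u1 hc ⊢
    linear_combination (108*(q:ℤ)+3)*t0 - t1 - (108*(q:ℤ)+(-9))*u0 + 3*u1 - 6*hc
  · rw [show 3*(12*q+1)/2+1 = 18*q+2 from by omega, show (12*q+1)/2 = 6*q+0 from by omega]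
    have t0 := LT0 (18*q+2)
    have t1 := LT1 (18*q+2)
    have u0 := LU0 (6*q+0)
    have u1 := LU1 (6*q+0)
    have hc := hchoose (12*q+1)
    zify at hc
    rw [show (18*q+2) % 6 = 2 from by omega, show E0t 2 = 0 from rfl] at t0
    rw [show (18*q+2) % 6 = 2 from by omega, show B1t 2 = -30 from rfl,
      show C1t 2 = -8 from rfl] at t1
    rw [show (6*q+0) % 2 = 0 from by omega, show EU0t 0 = 0 from rfl] at u0
    rw [show (6*q+0) % 2 = 0 from by omega, show B2t 0 = -10 from rfl,
      show C2t 0 = 0 from rfl] at u1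
    apply mul_left_cancel₀ (show (36:ℤ) ≠ 0 by norm_num)
    push_cast at t0 t1 u0 u1 hc ⊢
    linear_combination (108*(q:ℤ)+12)*t0 - t1 - (108*(q:ℤ)+(0))*u0 + 3*u1 - 6*hc
  · rw [show 3*(12*q+2)/2+1 = 18*q+4 from by omega, show (12*q+2)/2 = 6*q+1 from by omega]
    have t0 := LT0 (18*q+4)
    have t1 := LT1 (18*q+4)
    have u0 := LU0 (6*q+1)
    have u1 := LU1 (6*q+1)
    have hc := hchoose (12*q+2)
    zify at hc
    rw [show (18*q+4) % 6 = 4 from by omega, show E0t 4 = 4 from rfl] at t0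
    rw [show (18*q+4) % 6 = 4 from by omega, show B1t 4 = -6 from rfl,
      show C1t 4 = -16 from rfl] at t1
    rw [show (6*q+1) % 2 = 1 from by omega, show EU0t 1 = 1 from rfl] at u0
    rw [show (6*q+1) % 2 = 1 from by omega, show B2t 1 = -4 from rfl,
      show C2t 1 = -3 from rfl] at u1
    apply mul_left_cancel₀ (show (36:ℤ) ≠ 0 by norm_num)
    push_cast at t0 t1 u0 u1 hc ⊢
    linear_combination (108*(q:ℤ)+21)*t0 - t1 - (108*(q:ℤ)+(9))*u0 + 3*u1 - 6*hc
  · rw [show 3*(12*q+3)/2+1 = 18*q+5 from by omega, show (12*q+3)/2 = 6*q+1 from by omega]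
    have t0 := LT0 (18*q+5)
    have t1 := LT1 (18*q+5)
    have u0 := LU0 (6*q+1)
    have u1 := LU1 (6*q+1)
    have hc := hchoose (12*q+3)
    zify at hc
    rw [show (18*q+5) % 6 = 5 from by omega, show E0t 5 = 3 from rfl] at t0
    rw [show (18*q+5) % 6 = 5 from by omega, show B1t 5 = -12 from rfl,
      show C1t 5 = -17 from rfl] at t1
    rw [show (6*q+1) % 2 = 1 from by omega, show EU0t 1 = 1 from rfl] at u0
    rw [show (6*q+1) % 2 = 1 from by omega, show B2t 1 = -4 from rfl,
      show C2t 1 = -3 from rfl] at u1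
    apply mul_left_cancel₀ (show (36:ℤ) ≠ 0 by norm_num)
    push_cast at t0 t1 u0 u1 hc ⊢
    linear_combination (108*(q:ℤ)+30)*t0 - t1 - (108*(q:ℤ)+(18))*u0 + 3*u1 - 6*hc
  · rw [show 3*(12*q+4)/2+1 = 18*q+7 from by omega, show (12*q+4)/2 = 6*q+2 from by omega]
    have t0 := LT0 (18*q+7)
    have t1 := LT1 (18*q+7)
    have u0 := LU0 (6*q+2)
    have u1 := LU1 (6*q+2)
    have hc := hchoose (12*q+4)
    zify at hc
    rw [show (18*q+7) % 6 = 1 from by omega, show E0t 1 = 7 from rfl] at t0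
    rw [show (18*q+7) % 6 = 1 from by omega, show B1t 1 = 12 from rfl,
      show C1t 1 = -25 from rfl] at t1
    rw [show (6*q+2) % 2 = 0 from by omega, show EU0t 0 = 0 from rfl] at u0
    rw [show (6*q+2) % 2 = 0 from by omega, show B2t 0 = -10 from rfl,
      show C2t 0 = 0 from rfl] at u1
    apply mul_left_cancel₀ (show (36:ℤ) ≠ 0 by norm_num)
    push_cast at t0 t1 u0 u1 hc ⊢
    linear_combination (108*(q:ℤ)+39)*t0 - t1 - (108*(q:ℤ)+(27))*u0 + 3*u1 - 6*hc
  · rw [show 3*(12*q+5)/2+1 = 18*q+8 from by omega, show (12*q+5)/2 = 6*q+2 from by omega]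
    have t0 := LT0 (18*q+8)
    have t1 := LT1 (18*q+8)
    have u0 := LU0 (6*q+2)
    have u1 := LU1 (6*q+2)
    have hc := hchoose (12*q+5)
    zify at hc
    rw [show (18*q+8) % 6 = 2 from by omega, show E0t 2 = 0 from rfl] at t0
    rw [show (18*q+8) % 6 = 2 from by omega, show B1t 2 = -30 from rfl,
      show C1t 2 = -8 from rfl] at t1
    rw [show (6*q+2) % 2 = 0 from by omega, show EU0t 0 = 0 from rfl] at u0
    rw [show (6*q+2) % 2 = 0 from by omega, show B2t 0 = -10 from rfl,
      show C2t 0 = 0 from rfl] at u1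
    apply mul_left_cancel₀ (show (36:ℤ) ≠ 0 by norm_num)
    push_cast at t0 t1 u0 u1 hc ⊢
    linear_combination (108*(q:ℤ)+48)*t0 - t1 - (108*(q:ℤ)+(36))*u0 + 3*u1 - 6*hc
  · rw [show 3*(12*q+6)/2+1 = 18*q+10 from by omega, show (12*q+6)/2 = 6*q+3 from by omega]
    have t0 := LT0 (18*q+10)
    have t1 := LT1 (18*q+10)
    have u0 := LU0 (6*q+3)
    have u1 := LU1 (6*q+3)
    have hc := hchoose (12*q+6)
    zify at hc
    rw [show (18*q+10) % 6 = 4 from by omega, show E0t 4 = 4 from rfl] at t0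
    rw [show (18*q+10) % 6 = 4 from by omega, show B1t 4 = -6 from rfl,
      show C1t 4 = -16 from rfl] at t1
    rw [show (6*q+3) % 2 = 1 from by omega, show EU0t 1 = 1 from rfl] at u0
    rw [show (6*q+3) % 2 = 1 from by omega, show B2t 1 = -4 from rfl,
      show C2t 1 = -3 from rfl] at u1
    apply mul_left_cancel₀ (show (36:ℤ) ≠ 0 by norm_num)
    push_cast at t0 t1 u0 u1 hc ⊢
    linear_combination (108*(q:ℤ)+57)*t0 - t1 - (108*(q:ℤ)+(45))*u0 + 3*u1 - 6*hc
  · rw [show 3*(12*q+7)/2+1 = 18*q+11 from by omega, show (12*q+7)/2 = 6*q+3 from by omega]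
    have t0 := LT0 (18*q+11)
    have t1 := LT1 (18*q+11)
    have u0 := LU0 (6*q+3)
    have u1 := LU1 (6*q+3)
    have hc := hchoose (12*q+7)
    zify at hc
    rw [show (18*q+11) % 6 = 5 from by omega, show E0t 5 = 3 from rfl] at t0
    rw [show (18*q+11) % 6 = 5 from by omega, show B1t 5 = -12 from rfl,
      show C1t 5 = -17 from rfl] at t1
    rw [show (6*q+3) % 2 = 1 from by omega, show EU0t 1 = 1 from rfl] at u0
    rw [show (6*q+3) % 2 = 1 from by omega, show B2t 1 = -4 from rfl,
      show C2t 1 = -3 from rfl] at u1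
    apply mul_left_cancel₀ (show (36:ℤ) ≠ 0 by norm_num)
    push_cast at t0 t1 u0 u1 hc ⊢
    linear_combination (108*(q:ℤ)+66)*t0 - t1 - (108*(q:ℤ)+(54))*u0 + 3*u1 - 6*hc
  · rw [show 3*(12*q+8)/2+1 = 18*q+13 from by omega, show (12*q+8)/2 = 6*q+4 from by omega]
    have t0 := LT0 (18*q+13)
    have t1 := LT1 (18*q+13)
    have u0 := LU0 (6*q+4)
    have u1 := LU1 (6*q+4)
    have hc := hchoose (12*q+8)
    zify at hc
    rw [show (18*q+13) % 6 = 1 from by omega, show E0t 1 = 7 from rfl] at t0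
    rw [show (18*q+13) % 6 = 1 from by omega, show B1t 1 = 12 from rfl,
      show C1t 1 = -25 from rfl] at t1
    rw [show (6*q+4) % 2 = 0 from by omega, show EU0t 0 = 0 from rfl] at u0
    rw [show (6*q+4) % 2 = 0 from by omega, show B2t 0 = -10 from rfl,
      show C2t 0 = 0 from rfl] at u1
    apply mul_left_cancel₀ (show (36:ℤ) ≠ 0 by norm_num)
    push_cast at t0 t1 u0 u1 hc ⊢
    linear_combination (108*(q:ℤ)+75)*t0 - t1 - (108*(q:ℤ)+(63))*u0 + 3*u1 - 6*hc
  · rw [show 3*(12*q+9)/2+1 = 18*q+14 from by omega, show (12*q+9)/2 = 6*q+4 from by omega]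
    have t0 := LT0 (18*q+14)
    have t1 := LT1 (18*q+14)
    have u0 := LU0 (6*q+4)
    have u1 := LU1 (6*q+4)
    have hc := hchoose (12*q+9)
    zify at hc
    rw [show (18*q+14) % 6 = 2 from by omega, show E0t 2 = 0 from rfl] at t0
    rw [show (18*q+14) % 6 = 2 from by omega, show B1t 2 = -30 from rfl,
      show C1t 2 = -8 from rfl] at t1
    rw [show (6*q+4) % 2 = 0 from by omega, show EU0t 0 = 0 from rfl] at u0
    rw [show (6*q+4) % 2 = 0 from by omega, show B2t 0 = -10 from rfl,
      show C2t 0 = 0 from rfl] at u1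
    apply mul_left_cancel₀ (show (36:ℤ) ≠ 0 by norm_num)
    push_cast at t0 t1 u0 u1 hc ⊢
    linear_combination (108*(q:ℤ)+84)*t0 - t1 - (108*(q:ℤ)+(72))*u0 + 3*u1 - 6*hc
  · rw [show 3*(12*q+10)/2+1 = 18*q+16 from by omega, show (12*q+10)/2 = 6*q+5 from by omega]
    have t0 := LT0 (18*q+16)
    have t1 := LT1 (18*q+16)
    have u0 := LU0 (6*q+5)
    have u1 := LU1 (6*q+5)
    have hc := hchoose (12*q+10)
    zify at hc
    rw [show (18*q+16) % 6 = 4 from by omega, show E0t 4 = 4 from rfl] at t0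
    rw [show (18*q+16) % 6 = 4 from by omega, show B1t 4 = -6 from rfl,
      show C1t 4 = -16 from rfl] at t1
    rw [show (6*q+5) % 2 = 1 from by omega, show EU0t 1 = 1 from rfl] at u0
    rw [show (6*q+5) % 2 = 1 from by omega, show B2t 1 = -4 from rfl,
      show C2t 1 = -3 from rfl] at u1
    apply mul_left_cancel₀ (show (36:ℤ) ≠ 0 by norm_num)
    push_cast at t0 t1 u0 u1 hc ⊢
    linear_combination (108*(q:ℤ)+93)*t0 - t1 - (108*(q:ℤ)+(81))*u0 + 3*u1 - 6*hc
  · rw [show 3*(12*q+11)/2+1 = 18*q+17 from by omega, show (12*q+11)/2 = 6*q+5 from by omega]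
    have t0 := LT0 (18*q+17)
    have t1 := LT1 (18*q+17)
    have u0 := LU0 (6*q+5)
    have u1 := LU1 (6*q+5)
    have hc := hchoose (12*q+11)
    zify at hc
    rw [show (18*q+17) % 6 = 5 from by omega, show E0t 5 = 3 from rfl] at t0
    rw [show (18*q+17) % 6 = 5 from by omega, show B1t 5 = -12 from rfl,
      show C1t 5 = -17 from rfl] at t1
    rw [show (6*q+5) % 2 = 1 from by omega, show EU0t 1 = 1 from rfl] at u0
    rw [show (6*q+5) % 2 = 1 from by omega, show B2t 1 = -4 from rfl,
      show C2t 1 = -3 from rfl] at u1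
    apply mul_left_cancel₀ (show (36:ℤ) ≠ 0 by norm_num)
    push_cast at t0 t1 u0 u1 hc ⊢
    linear_combination (108*(q:ℤ)+102)*t0 - t1 - (108*(q:ℤ)+(90))*u0 + 3*u1 - 6*hc

/-- The combinatorial consistency of the decomposition of Symⁿ(Sym³ℂ²): the total
dimension of ⊕_{i=0}^{n} (Sym^{3n-2i}ℂ²)^{⊕(⌊i/2⌋-⌊(i-1)/3⌋)} ⊕
⊕_{i=n+1}^{⌊3n/2⌋} (Sym^{3n-2i}ℂ²)^{⊕(⌊i/2⌋-⌊(i-1)/3⌋-⌊(i-n-1)/2⌋-1)} equals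
dim Symⁿ(ℂ⁴) = (n+1)(n+2)(n+3)/6 = C(n+3,3). -/
theorem stmt13 (n : ℕ) :
    (∑ i ∈ Finset.range (n + 1),
        (⌊(i : ℚ) / 2⌋ - ⌊((i : ℚ) - 1) / 3⌋) * (3 * (n : ℤ) - 2 * i + 1))
      + (∑ i ∈ Finset.Icc (n + 1) (3 * n / 2),
          (⌊(i : ℚ) / 2⌋ - ⌊((i : ℚ) - 1) / 3⌋ - ⌊((i : ℚ) - (n : ℚ) - 1) / 2⌋ - 1)
            * (3 * (n : ℤ) - 2 * i + 1))
      = ((n + 3).choose 3 : ℤ) := by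
  have fl1 : ∀ i : ℕ, ⌊(i : ℚ) / 2⌋ = (i : ℤ) / 2 := by
    intro i
    rw [show ((i:ℚ)) = ((i:ℤ):ℚ) by push_cast; ring, show (2:ℚ) = ((2:ℕ):ℚ) by norm_num]
    exact Rat.floor_intCast_div_natCast _ _
  have fl2 : ∀ i : ℕ, ⌊((i : ℚ) - 1) / 3⌋ = ((i : ℤ) - 1) / 3 := by
    intro i
    rw [show ((i:ℚ)-1) = (((i:ℤ)-1:ℤ):ℚ) by push_cast; ring, show (3:ℚ) = ((3:ℕ):ℚ) by norm_num]
    exact Rat.floor_intCast_div_natCast _ _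
  have fl3 : ∀ i : ℕ, ⌊((i : ℚ) - (n : ℚ) - 1) / 2⌋ = ((i : ℤ) - (n : ℤ) - 1) / 2 := by
    intro i
    rw [show ((i:ℚ)-(n:ℚ)-1) = (((i:ℤ)-(n:ℤ)-1:ℤ):ℚ) by push_cast; ring,
      show (2:ℚ) = ((2:ℕ):ℚ) by norm_num]
    exact Rat.floor_intCast_div_natCast _ _
  simp only [fl1, fl2, fl3]
  have e1 : ∑ i ∈ Finset.Icc (n + 1) (3 * n / 2),
        ((i:ℤ)/2 - ((i:ℤ)-1)/3 - ((i:ℤ) - (n:ℤ) - 1)/2 - 1) * (3 * (n : ℤ) - 2 * (i:ℤ) + 1)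
      = ∑ i ∈ Finset.Ico (n + 1) (3 * n / 2 + 1),
        ((i:ℤ)/2 - ((i:ℤ)-1)/3 - ((i:ℤ) - (n:ℤ) - 1)/2 - 1) * (3 * (n : ℤ) - 2 * (i:ℤ) + 1) := by
    rw [Finset.Ico_add_one_right_eq_Icc]
  have e2 : ∑ i ∈ Finset.Ico (n + 1) (3 * n / 2 + 1),
        ((i:ℤ)/2 - ((i:ℤ)-1)/3 - ((i:ℤ) - (n:ℤ) - 1)/2 - 1) * (3 * (n : ℤ) - 2 * (i:ℤ) + 1)
      = (∑ i ∈ Finset.Ico (n + 1) (3 * n / 2 + 1),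
          ((i:ℤ)/2 - ((i:ℤ)-1)/3) * (3 * (n : ℤ) - 2 * (i:ℤ) + 1))
        - ∑ i ∈ Finset.Ico (n + 1) (3 * n / 2 + 1),
          (((i:ℤ) - (n:ℤ) - 1)/2 + 1) * (3 * (n : ℤ) - 2 * (i:ℤ) + 1) := by
    rw [← Finset.sum_sub_distrib]
    exact Finset.sum_congr rfl fun i _ => by ring
  have e3 : (∑ i ∈ Finset.range (n + 1), ((i:ℤ)/2 - ((i:ℤ)-1)/3) * (3 * (n : ℤ) - 2 * (i:ℤ) + 1))
        + (∑ i ∈ Finset.Ico (n + 1) (3 * n / 2 + 1),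
            ((i:ℤ)/2 - ((i:ℤ)-1)/3) * (3 * (n : ℤ) - 2 * (i:ℤ) + 1))
      = ∑ i ∈ Finset.range (3 * n / 2 + 1),
          ((i:ℤ)/2 - ((i:ℤ)-1)/3) * (3 * (n : ℤ) - 2 * (i:ℤ) + 1) := by
    rw [Finset.range_eq_Ico, Finset.range_eq_Ico]
    exact Finset.sum_Ico_consecutive _ (M := ℤ) (m := 0) (n := n + 1) (k := 3 * n / 2 + 1) (by omega) (by omega)
  have e4 : ∑ i ∈ Finset.Ico (n + 1) (3 * n / 2 + 1),
        (((i:ℤ) - (n:ℤ) - 1)/2 + 1) * (3 * (n : ℤ) - 2 * (i:ℤ) + 1)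
      = ∑ j ∈ Finset.range (n/2), ((j:ℤ)/2 + 1) * ((n:ℤ) - 1 - 2*(j:ℤ)) := by
    rw [Finset.sum_Ico_eq_sum_range, show 3 * n / 2 + 1 - (n + 1) = n / 2 from by omega]
    refine Finset.sum_congr rfl fun j _ => ?_
    have hD : (((n+1+j : ℕ):ℤ) - (n:ℤ) - 1)/2 = (j:ℤ)/2 := by omega
    rw [hD]
    congr 1
    push_cast; ring
  have hk := key n
  linarith [e1, e2, e3, e4, hk]
end
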